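/- For every even integer t ≥ 10, with n = 6t + 2, k = 2t + 1, e = (3/2)t and f = 3, there exists an ascending partition P = [p_1, …, p_k] of n of size k with p_1 = ⋯ = p_e = 2 and p_{e+1} = ⋯ = p_{e+f} = 3, such that slack_j(P) ≥ 0 for all 1 ≤ j ≤ k − 1 and P is not equitable. -/

import Mathlib

/-- `s^{n,k} = n(n+1)/(2k)`. -/
def sNK (n k : ℕ) : ℕ := n * (n + 1) / (2 * k)

/-- `slack_j(P) = Σ_{i=1}^{p_1+⋯+p_j} (n − i + 1) − j·s^{n,k}`. -/
def slack (n k : ℕ) (p : ℕ → ℕ) (j : ℕ) : ℤ :=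
  (∑ i ∈ Finset.Icc 1 (∑ t ∈ Finset.Icc 1 j, p t), ((n : ℤ) - (i : ℤ) + 1))
    - (j : ℤ) * (sNK n k : ℤ)

/-- `p` (on indices `1,…,k`) is an ascending partition of `n` of size `k`. -/
def IsAscPartition (n k : ℕ) (p : ℕ → ℕ) : Prop :=
  (∀ i, 1 ≤ i → i ≤ k → 1 ≤ p i) ∧
  (∀ i j, 1 ≤ i → i ≤ j → j ≤ k → p i ≤ p j) ∧
  ∑ i ∈ Finset.Icc 1 k, p i = n

/-- `p` is equitable: `{1,…,n}` partitions into sets `A_1,…,A_k` with `|A_i| = p_i`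
and each element sum equal to `s^{n,k}`. -/
def Equitable (n k : ℕ) (p : ℕ → ℕ) : Prop :=
  ∃ A : ℕ → Finset ℕ,
    (∀ i j, 1 ≤ i → i < j → j ≤ k → Disjoint (A i) (A j)) ∧
    (Finset.Icc 1 k).biUnion A = Finset.Icc 1 n ∧
    (∀ i, 1 ≤ i → i ≤ k → (A i).card = p i) ∧
    (∀ i, 1 ≤ i → i ≤ k → ∑ x ∈ A i, x = sNK n k)


/-!
Write `t = 2u`, so `n = 12u + 2`, `k = 4u + 1` and `s^{n,k} = 18u + 3`. Take `3u` parts `2`,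
three parts `3`, `u - 3` parts `6` and one part `11`. With `c = p_1 + ⋯ + p_j`,
`2 slack_j = c (2n + 1 - c) - 2 j s`, so on each of the three ranges of `j` the slack condition is
an explicit quadratic inequality in `u` and `j`.

The partition is not equitable: a pair summing to `s` with entries at most `n` lies in
`B = [s - n, n]`, and since `2s < 3(n + 1)` every triple summing to `s` meets `B`. So the `3u`
pairs and three triples need `6u + 3` distinct elements of `B`, which has only `6u + 2`.
-/

open Finset

lemma two_mul_sum_Icc_sub_add_one (n c : ℕ) :
    2 * ∑ i ∈ Icc 1 c, ((n : ℤ) - i + 1) = c * (2 * n + 1 - c) := by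
  induction c with
  | zero => simp
  | succ c ih =>
    rw [sum_Icc_succ_top (by omega), mul_add, ih]
    push_cast
    ring

lemma slack_nonneg_of_le {n k j c : ℕ} {p : ℕ → ℕ} (hc : ∑ i ∈ Icc 1 j, p i = c)
    (h : 2 * j * (sNK n k : ℤ) ≤ c * (2 * n + 1 - c)) : 0 ≤ slack n k p j := by
  have := two_mul_sum_Icc_sub_add_one n c
  rw [slack, hc]
  linarith

lemma subset_Icc_of_card_eq_two {S : Finset ℕ} {n s : ℕ} (hn : ∀ x ∈ S, x ≤ n)
    (hcard : #S = 2) (hsum : ∑ x ∈ S, x = s) : S ⊆ Icc (s - n) n := by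
  obtain ⟨x, y, hxy, rfl⟩ := card_eq_two.mp hcard
  rw [sum_pair hxy] at hsum
  have hx := hn x (by simp)
  have hy := hn y (by simp)
  intro z hz
  rw [mem_insert, mem_singleton] at hz
  rw [mem_Icc]
  omega

lemma exists_mem_Icc_of_card_eq_three {S : Finset ℕ} {n s : ℕ} (hn : ∀ x ∈ S, x ≤ n)
    (hcard : #S = 3) (hsum : ∑ x ∈ S, x = s) (hs : 2 * s < 3 * (n + 1)) :
    ∃ x ∈ S, x ∈ Icc (s - n) n := by
  by_contra! hout
  obtain ⟨y, hy⟩ := card_pos.mp (by omega : 0 < #S)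
  have hys := hout y hy
  have hyn := hn y hy
  rw [mem_Icc] at hys
  have hlt : ∀ x ∈ S, x ≤ s - n - 1 := fun x hx => by
    have := hout x hx
    have := hn x hx
    rw [mem_Icc] at *
    omega
  have := sum_le_card_nsmul S (fun x => x) _ hlt
  rw [hsum, hcard, smul_eq_mul] at this
  omega

theorem not_equitable_of_pairs_of_triples {n k a b : ℕ} {p : ℕ → ℕ} (hk : a + b ≤ k)
    (hpair : ∀ i, 1 ≤ i → i ≤ a → p i = 2) (htriple : ∀ i, a + 1 ≤ i → i ≤ a + b → p i = 3)
    (hs : 2 * sNK n k < 3 * (n + 1)) (hcount : 2 * n + 1 < 2 * a + b + sNK n k) :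
    ¬ Equitable n k p := by
  rintro ⟨A, hdisj, hcover, hcard, hsum⟩
  set B := Icc (sNK n k - n) n
  have hle : ∀ i ∈ Ioc 0 (a + b), ∀ x ∈ A i, x ≤ n := fun i hi x hx => by
    rw [mem_Ioc] at hi
    have : x ∈ Icc 1 n := hcover ▸ mem_biUnion.mpr ⟨i, mem_Icc.mpr ⟨hi.1, by omega⟩, hx⟩
    exact (mem_Icc.mp this).2
  have hpairs : ∑ i ∈ Ioc 0 a, #(A i ∩ B) = ∑ _i ∈ Ioc 0 a, 2 := by
    refine sum_congr rfl fun i hi => ?_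
    have hi' := mem_Ioc.mp hi
    have hcard2 : #(A i) = 2 := (hcard i hi'.1 (by omega)).trans (hpair i hi'.1 hi'.2)
    have hAB := subset_Icc_of_card_eq_two (hle i (mem_Ioc.mpr ⟨by omega, by omega⟩)) hcard2
      (hsum i hi'.1 (by omega))
    rw [inter_eq_left.mpr hAB, hcard2]
  have htriples : ∑ _i ∈ Ioc a (a + b), 1 ≤ ∑ i ∈ Ioc a (a + b), #(A i ∩ B) := by
    refine sum_le_sum fun i hi => ?_
    have hi' := mem_Ioc.mp hi
    obtain ⟨x, hxA, hxB⟩ :=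
      exists_mem_Icc_of_card_eq_three (hle i (mem_Ioc.mpr ⟨by omega, by omega⟩))
      ((hcard i (by omega) (by omega)).trans (htriple i hi'.1 hi'.2))
      (hsum i (by omega) (by omega)) hs
    exact card_pos.mpr ⟨x, mem_inter.mpr ⟨hxA, hxB⟩⟩
  have hdisjB : ((Ioc 0 (a + b) : Finset ℕ) : Set ℕ).PairwiseDisjoint (fun i => A i ∩ B) := by
    intro i hi j hj hij
    simp only [coe_Ioc, Set.mem_Ioc] at hi hj
    refine Disjoint.mono inter_subset_left inter_subset_left ?_
    rcases hij.lt_or_gt with h | h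
    · exact hdisj i j (by omega) h (by omega)
    · exact (hdisj j i (by omega) h (by omega)).symm
  have hB : ∑ i ∈ Ioc 0 (a + b), #(A i ∩ B) ≤ #B := by
    rw [← card_biUnion hdisjB]
    exact card_le_card (biUnion_subset.mpr fun i _ => inter_subset_right)
  rw [← sum_Ioc_consecutive _ (Nat.zero_le a) (Nat.le_add_right a b), hpairs] at hB
  simp only [sum_const, Nat.card_Ioc, smul_eq_mul, B, Nat.card_Icc] at hB htriples
  omega

lemma sNK_twelve_mul_add_two (u : ℕ) : sNK (12 * u + 2) (4 * u + 1) = 18 * u + 3 := by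
  rw [sNK, show (12 * u + 2) * (12 * u + 2 + 1) = 2 * (4 * u + 1) * (18 * u + 3) by ring,
    Nat.mul_div_cancel_left _ (by positivity)]

def nonEquitablePartition (u i : ℕ) : ℕ :=
  if i ≤ 3 * u then 2 else if i ≤ 3 * u + 3 then 3 else if i ≤ 4 * u then 6 else 11

section nonEquitablePartition

variable {u : ℕ}

lemma nonEquitablePartition_of_le {i : ℕ} (hi : i ≤ 3 * u) : nonEquitablePartition u i = 2 :=
  if_pos hi

lemma nonEquitablePartition_of_lt_of_le {i : ℕ} (h₁ : 3 * u < i) (h₂ : i ≤ 3 * u + 3) :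
    nonEquitablePartition u i = 3 := by
  rw [nonEquitablePartition, if_neg (by omega), if_pos h₂]

lemma sum_Icc_nonEquitablePartition {j : ℕ} (hj : j ≤ 4 * u + 1) :
    ∑ i ∈ Icc 1 j, nonEquitablePartition u i =
      if j ≤ 3 * u then 2 * j else if j ≤ 3 * u + 3 then 3 * j - 3 * u
        else if j ≤ 4 * u then 6 * j - (12 * u + 9) else 12 * u + 2 := by
  induction j with
  | zero => simp
  | succ m ih =>
    rw [sum_Icc_succ_top (by omega), ih (by omega), nonEquitablePartition]
    split_ifs <;> omega

lemma isAscPartition_nonEquitablePartition (hu : 3 ≤ u) :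
    IsAscPartition (12 * u + 2) (4 * u + 1) (nonEquitablePartition u) := by
  refine ⟨fun i _ _ => ?_, fun i j _ _ _ => ?_, ?_⟩
  · unfold nonEquitablePartition; split_ifs <;> omega
  · unfold nonEquitablePartition; split_ifs <;> omega
  · rw [sum_Icc_nonEquitablePartition le_rfl]
    split_ifs <;> omega

lemma slack_nonEquitablePartition_nonneg (hu : 5 ≤ u) {j : ℕ} (hj : j ≤ 4 * u) :
    0 ≤ slack (12 * u + 2) (4 * u + 1) (nonEquitablePartition u) j := by
  have hc := sum_Icc_nonEquitablePartition (u := u) (j := j) (by omega)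
  refine slack_nonneg_of_le hc ?_
  rw [sNK_twelve_mul_add_two]
  have hu' : (5 : ℤ) ≤ u := by exact_mod_cast hu
  split_ifs with h₁ h₂
  · have : (j : ℤ) ≤ 3 * u := by exact_mod_cast h₁
    push_cast
    nlinarith
  · have hc' : ((3 * j - 3 * u : ℕ) : ℤ) = 3 * j - 3 * u := by omega
    have : ((j : ℤ) - 3 * u - 1) * (3 * u + 3 - j) ≥ 0 :=
      mul_nonneg (by omega) (by omega)
    rw [hc']
    push_cast
    nlinarith
  · have hc' : ((6 * j - (12 * u + 9) : ℕ) : ℤ) = 6 * j - (12 * u + 9) := by omega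
    have : ((j : ℤ) - 3 * u - 4) * (4 * u - j) ≥ 0 := mul_nonneg (by omega) (by omega)
    rw [hc']
    push_cast
    nlinarith

lemma not_equitable_nonEquitablePartition (hu : 2 ≤ u) :
    ¬ Equitable (12 * u + 2) (4 * u + 1) (nonEquitablePartition u) := by
  refine not_equitable_of_pairs_of_triples (a := 3 * u) (b := 3) (by omega)
    (fun i _ hi => nonEquitablePartition_of_le hi)
    (fun i h₁ h₂ => nonEquitablePartition_of_lt_of_le h₁ h₂) ?_ ?_
  all_goals rw [sNK_twelve_mul_add_two]; omega

end nonEquitablePartition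

theorem statement13 (t : ℕ) (ht : Even t) (ht10 : 10 ≤ t) (e : ℕ) (he : 2 * e = 3 * t) :
    ∃ p : ℕ → ℕ,
      IsAscPartition (6 * t + 2) (2 * t + 1) p ∧
      (∀ i, 1 ≤ i → i ≤ e → p i = 2) ∧
      (∀ i, e + 1 ≤ i → i ≤ e + 3 → p i = 3) ∧
      (∀ j, 1 ≤ j → j ≤ 2 * t → 0 ≤ slack (6 * t + 2) (2 * t + 1) p j) ∧
      ¬ Equitable (6 * t + 2) (2 * t + 1) p := by
  obtain ⟨u, rfl⟩ := ht
  obtain rfl : e = 3 * u := by omega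
  rw [show 6 * (u + u) + 2 = 12 * u + 2 by ring, show 2 * (u + u) + 1 = 4 * u + 1 by ring]
  refine ⟨nonEquitablePartition u, isAscPartition_nonEquitablePartition (by omega),
    fun i _ hi => nonEquitablePartition_of_le hi,
    fun i h₁ h₂ => nonEquitablePartition_of_lt_of_le h₁ h₂,
    fun j _ hj => slack_nonEquitablePartition_nonneg (by omega) (by omega),
    not_equitable_nonEquitablePartition (by omega)⟩
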